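/- arXiv:2206.09147 — 4 statements merged into one kernel-verified Lean document; each statement's English description precedes it below -/
import Mathlib

section
/- Marginals of the multivariate deformed Pólya distribution: let 0 < τ₂ < τ₁ be reals, let m be a nonzero integer, let n, k be naturals with k ≥ 1, let 1 ≤ μ ≤ k, and let β₁, …, β_k, β be reals such that β is not equal to any of 0, 1, …, n−1. Fix naturals y₁, …, y_μ with y₁ + ⋯ + y_μ ≤ n and set x_μ = y₁ + ⋯ + y_μ. Then Σ P_{n,β,m}(y₁,…,y_μ,y_{μ+1},…,y_k) = P'_{n,β,m}(y₁,…,y_μ), where the sum runs over all tuples (y_{μ+1},…,y_k) of naturals with y_{μ+1} + ⋯ + y_k ≤ n − x_μ, P is the k-variate deformed Pólya mass with parameters n, (β₁,…,β_k), β, m, and P' is the μ-variate deformed Pólya mass with parameters n, (β₁,…,β_μ), β, m. -/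
open Finset

noncomputable def dnum (τ₁ τ₂ x : ℝ) : ℝ := (τ₁ ^ x - τ₂ ^ x) / (τ₁ - τ₂)

noncomputable def dfac (τ₁ τ₂ : ℝ) (r : ℕ) : ℝ :=
  ∏ j ∈ Finset.range r, dnum τ₁ τ₂ ((j : ℝ) + 1)

noncomputable def dfall (τ₁ τ₂ x : ℝ) (r : ℕ) : ℝ :=
  ∏ i ∈ Finset.range r, dnum τ₁ τ₂ (x - (i : ℝ))

noncomputable def dbinom (τ₁ τ₂ x : ℝ) (r : ℕ) : ℝ := dfall τ₁ τ₂ x r / dfac τ₁ τ₂ r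

noncomputable def dmulti (τ₁ τ₂ x : ℝ) {k : ℕ} (r : Fin k → ℕ) : ℝ :=
  dfall τ₁ τ₂ x (∑ j, r j) / ∏ j, dfac τ₁ τ₂ (r j)

/-- The `k`-variate deformed Pólya mass with parameters `n`, `(β₁,…,β_k)`, `β`
and nonzero integer `m`, built from `σ = (τ₁^{−m}, τ₂^{−m})`: for a tuple
`(y₁,…,y_k)` with `y₁+⋯+y_k ≤ n`, writing `y_{k+1} = n − (y₁+⋯+y_k)`,
`β_{k+1} = β − (β₁+⋯+β_k)` and `x_j = y₁+⋯+y_j`, it equals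
`τ₁^{−m Σ_j x_j(β_{j+1}−y_{j+1})} τ₂^{−m Σ_j (n−x_j)(β_j−y_j)}
  M_σ(n; y₁,…,y_k) (Π_{j=1}^{k+1} [β_j]_{y_j,σ}) / [β]_{n,σ}`. -/
noncomputable def polyaMass (τ₁ τ₂ : ℝ) (m : ℤ) (n : ℕ) {k : ℕ}
    (βv : Fin k → ℝ) (β : ℝ) (y : Fin k → ℕ) : ℝ :=
  let σ₁ : ℝ := τ₁ ^ (-m)
  let σ₂ : ℝ := τ₂ ^ (-m)
  let Y : Fin (k + 1) → ℕ := Fin.snoc y (n - ∑ j, y j)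
  let B : Fin (k + 1) → ℝ := Fin.snoc βv (β - ∑ j, βv j)
  let X : Fin k → ℕ := fun j => ∑ i ∈ Finset.Iic j, y i
  τ₁ ^ (-(m : ℝ) * ∑ j : Fin k, (X j : ℝ) * (B j.succ - (Y j.succ : ℝ))) *
    τ₂ ^ (-(m : ℝ) * ∑ j : Fin k, ((n : ℝ) - (X j : ℝ)) * (βv j - (y j : ℝ))) *
    dmulti σ₁ σ₂ (n : ℝ) y *
    (∏ j : Fin (k + 1), dfall σ₁ σ₂ (B j) (Y j)) / dfall σ₁ σ₂ β n

/-!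
Summing the `(K+1)`-variate mass over its last coordinate `a` merges the last two cells (sizes
`a`, `N - a` with `N = n - x_K`, parameters `u = β_{K+1}`, `v = β_{K+2}`) into a single cell of
size `N` and parameter `u + v`. Every factor except
`C_σ(N, a) σ₁^{a (v - (N - a))} σ₂^{(N - a)(u - a)} [u]_{a,σ} [v]_{N-a,σ}` is independent of `a`,
and the sum of these terms is `[u + v]_{N,σ}` by the deformed Chu–Vandermonde identity, which in
turn follows from `[a + b] = σ₁^a [b] + σ₂^b [a]` by induction on `N`. Summing out the coordinates
`k, k - 1, …, μ + 1` one at a time gives the marginal.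
-/

section Deformed

variable {σ₁ σ₂ : ℝ}

lemma dnum_zero : dnum σ₁ σ₂ 0 = 0 := by simp [dnum]

lemma dnum_add (h₁ : 0 < σ₁) (h₂ : 0 < σ₂) (x y : ℝ) :
    dnum σ₁ σ₂ (x + y) = σ₁ ^ x * dnum σ₁ σ₂ y + σ₂ ^ y * dnum σ₁ σ₂ x := by
  simp only [dnum, Real.rpow_add h₁, Real.rpow_add h₂]
  ring

lemma dnum_pos (h₁ : 0 < σ₁) (h₂ : 0 < σ₂) (hσ : σ₁ ≠ σ₂) {x : ℝ} (hx : 0 < x) :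
    0 < dnum σ₁ σ₂ x := by
  rcases hσ.lt_or_gt with h | h
  · exact div_pos_of_neg_of_neg (sub_neg.2 (Real.rpow_lt_rpow h₁.le h hx)) (sub_neg.2 h)
  · exact div_pos (sub_pos.2 (Real.rpow_lt_rpow h₂.le h hx)) (sub_pos.2 h)

lemma dfac_pos (h₁ : 0 < σ₁) (h₂ : 0 < σ₂) (hσ : σ₁ ≠ σ₂) (r : ℕ) : 0 < dfac σ₁ σ₂ r :=
  prod_pos fun _ _ => dnum_pos h₁ h₂ hσ (by positivity)

lemma dfac_succ (r : ℕ) : dfac σ₁ σ₂ (r + 1) = dfac σ₁ σ₂ r * dnum σ₁ σ₂ (r + 1) :=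
  prod_range_succ _ r

lemma dfall_succ (x : ℝ) (r : ℕ) :
    dfall σ₁ σ₂ x (r + 1) = dfall σ₁ σ₂ x r * dnum σ₁ σ₂ (x - r) :=
  prod_range_succ _ r

lemma dfall_add (x : ℝ) (p q : ℕ) :
    dfall σ₁ σ₂ x (p + q) = dfall σ₁ σ₂ x p * dfall σ₁ σ₂ (x - p) q := by
  rw [dfall, prod_range_add]
  congr 1
  exact prod_congr rfl fun i _ => by push_cast; ring_nf

lemma dfall_natCast_mul_dfac_sub {N a : ℕ} (h : a ≤ N) :
    dfall σ₁ σ₂ N a * dfac σ₁ σ₂ (N - a) = dfac σ₁ σ₂ N := by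
  induction a with
  | zero => simp [dfall]
  | succ a ih =>
    have hsucc : N - a = N - (a + 1) + 1 := by omega
    rw [← ih (by omega), hsucc, dfac_succ, dfall_succ, Nat.cast_sub h]
    push_cast
    ring_nf

lemma dbinom_natCast {N a : ℕ} (h₁ : 0 < σ₁) (h₂ : 0 < σ₂) (hσ : σ₁ ≠ σ₂) (h : a ≤ N) :
    dbinom σ₁ σ₂ N a = dfac σ₁ σ₂ N / (dfac σ₁ σ₂ a * dfac σ₁ σ₂ (N - a)) := by
  have := (dfac_pos h₁ h₂ hσ (N - a)).ne'
  rw [dbinom, ← dfall_natCast_mul_dfac_sub h]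
  field_simp

noncomputable def vandermondeTerm (σ₁ σ₂ u v : ℝ) (a b : ℕ) : ℝ :=
  σ₁ ^ ((a : ℝ) * (v - b)) * σ₂ ^ ((b : ℝ) * (u - a)) * dfall σ₁ σ₂ u a * dfall σ₁ σ₂ v b /
    (dfac σ₁ σ₂ a * dfac σ₁ σ₂ b)

lemma vandermondeTerm_mul_dnum (h₁ : 0 < σ₁) (h₂ : 0 < σ₂) (hσ : σ₁ ≠ σ₂) (u v : ℝ) (a b : ℕ) :
    vandermondeTerm σ₁ σ₂ u v a b * dnum σ₁ σ₂ (u + v - (a + b)) =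
      σ₂ ^ (b : ℝ) * dnum σ₁ σ₂ (a + 1) * vandermondeTerm σ₁ σ₂ u v (a + 1) b +
      σ₁ ^ (a : ℝ) * dnum σ₁ σ₂ (b + 1) * vandermondeTerm σ₁ σ₂ u v a (b + 1) := by
  have hsplit : dnum σ₁ σ₂ (u + v - (a + b)) =
      σ₁ ^ (v - b) * dnum σ₁ σ₂ (u - a) + σ₂ ^ (u - a) * dnum σ₁ σ₂ (v - b) := by
    rw [← dnum_add h₁ h₂]; ring_nf
  have e₁ : σ₁ ^ (((a : ℝ) + 1) * (v - b)) = σ₁ ^ ((a : ℝ) * (v - b)) * σ₁ ^ (v - b) := by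
    rw [← Real.rpow_add h₁]; ring_nf
  have e₂ : σ₂ ^ ((b : ℝ) * (u - (a + 1))) * σ₂ ^ (b : ℝ) = σ₂ ^ ((b : ℝ) * (u - a)) := by
    rw [← Real.rpow_add h₂]; ring_nf
  have e₃ : σ₁ ^ ((a : ℝ) * (v - (b + 1))) * σ₁ ^ (a : ℝ) = σ₁ ^ ((a : ℝ) * (v - b)) := by
    rw [← Real.rpow_add h₁]; ring_nf
  have e₄ : σ₂ ^ (((b : ℝ) + 1) * (u - a)) = σ₂ ^ ((b : ℝ) * (u - a)) * σ₂ ^ (u - a) := by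
    rw [← Real.rpow_add h₂]; ring_nf
  have := (dfac_pos h₁ h₂ hσ a).ne'
  have := (dfac_pos h₁ h₂ hσ b).ne'
  have := (dnum_pos h₁ h₂ hσ (by positivity : (0 : ℝ) < a + 1)).ne'
  have := (dnum_pos h₁ h₂ hσ (by positivity : (0 : ℝ) < b + 1)).ne'
  simp only [vandermondeTerm, hsplit, dfall_succ, dfac_succ]
  push_cast
  rw [e₁, e₄, ← e₂, ← e₃]
  field_simp

theorem sum_antidiagonal_vandermondeTerm (h₁ : 0 < σ₁) (h₂ : 0 < σ₂) (hσ : σ₁ ≠ σ₂)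
    (u v : ℝ) (N : ℕ) :
    ∑ p ∈ antidiagonal N, vandermondeTerm σ₁ σ₂ u v p.1 p.2 =
      dfall σ₁ σ₂ (u + v) N / dfac σ₁ σ₂ N := by
  induction N with
  | zero => simp [vandermondeTerm, dfall, dfac]
  | succ N ih =>
    set T := vandermondeTerm σ₁ σ₂ u v
    have hrec : (∑ p ∈ antidiagonal (N + 1), T p.1 p.2) * dnum σ₁ σ₂ (N + 1) =
        (∑ p ∈ antidiagonal N, T p.1 p.2) * dnum σ₁ σ₂ (u + v - N) := by
      calc (∑ p ∈ antidiagonal (N + 1), T p.1 p.2) * dnum σ₁ σ₂ (N + 1)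
          = ∑ p ∈ antidiagonal (N + 1), (σ₂ ^ (p.2 : ℝ) * dnum σ₁ σ₂ p.1 * T p.1 p.2 +
              σ₁ ^ (p.1 : ℝ) * dnum σ₁ σ₂ p.2 * T p.1 p.2) := by
            rw [sum_mul]
            refine sum_congr rfl fun p hp => ?_
            have hp : (p.1 : ℝ) + p.2 = N + 1 := by exact_mod_cast mem_antidiagonal.1 hp
            rw [← hp, dnum_add h₁ h₂]
            ring
        _ = ∑ p ∈ antidiagonal N, (σ₂ ^ (p.2 : ℝ) * dnum σ₁ σ₂ (p.1 + 1) * T (p.1 + 1) p.2 +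
              σ₁ ^ (p.1 : ℝ) * dnum σ₁ σ₂ (p.2 + 1) * T p.1 (p.2 + 1)) := by
            rw [sum_add_distrib, sum_add_distrib, Nat.sum_antidiagonal_succ,
              Nat.sum_antidiagonal_succ']
            simp [dnum_zero]
        _ = (∑ p ∈ antidiagonal N, T p.1 p.2) * dnum σ₁ σ₂ (u + v - N) := by
            rw [sum_mul]
            refine sum_congr rfl fun p hp => ?_
            have hp : (p.1 : ℝ) + p.2 = N := by exact_mod_cast mem_antidiagonal.1 hp
            rw [← hp, vandermondeTerm_mul_dnum h₁ h₂ hσ]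
    have := (dfac_pos h₁ h₂ hσ N).ne'
    have hN := (dnum_pos h₁ h₂ hσ (by positivity : (0 : ℝ) < N + 1)).ne'
    rw [ih] at hrec
    rw [← mul_left_inj' hN, hrec, dfall_succ, dfac_succ]
    field_simp

theorem dfall_add_eq_sum (h₁ : 0 < σ₁) (h₂ : 0 < σ₂) (hσ : σ₁ ≠ σ₂) (u v : ℝ) (N : ℕ) :
    dfall σ₁ σ₂ (u + v) N = ∑ a ∈ range (N + 1), dbinom σ₁ σ₂ N a *
      σ₁ ^ ((a : ℝ) * (v - (N - a : ℕ))) * σ₂ ^ (((N - a : ℕ) : ℝ) * (u - a)) *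
      dfall σ₁ σ₂ u a * dfall σ₁ σ₂ v (N - a) := by
  have hN := (dfac_pos h₁ h₂ hσ N).ne'
  calc dfall σ₁ σ₂ (u + v) N
      = dfac σ₁ σ₂ N * ∑ p ∈ antidiagonal N, vandermondeTerm σ₁ σ₂ u v p.1 p.2 := by
        rw [sum_antidiagonal_vandermondeTerm h₁ h₂ hσ]; field_simp
    _ = _ := by
        rw [Nat.sum_antidiagonal_eq_sum_range_succ_mk, mul_sum]
        refine sum_congr rfl fun a ha => ?_
        rw [dbinom_natCast h₁ h₂ hσ (Nat.lt_succ_iff.1 (mem_range.1 ha)), vandermondeTerm]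
        ring

end Deformed

lemma dmulti_snoc (σ₁ σ₂ x : ℝ) {k : ℕ} (r : Fin k → ℕ) (a : ℕ) :
    dmulti σ₁ σ₂ x (Fin.snoc r a : Fin (k + 1) → ℕ) =
      dmulti σ₁ σ₂ x r * dbinom σ₁ σ₂ (x - ∑ j, r j) a := by
  simp only [dmulti, dbinom, Fin.sum_snoc, dfall_add, Fin.prod_univ_castSucc, Fin.snoc_castSucc,
    Fin.snoc_last]
  push_cast
  exact (div_mul_div_comm _ _ _ _).symm

lemma Fin.Iic_last_eq_univ (k : ℕ) : Iic (Fin.last k) = univ := Iic_top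

lemma sum_prefixSum_snoc {M : Type*} [AddCommMonoid M] {k : ℕ} (y : Fin k → ℕ) (a : ℕ)
    (F : ℕ → Fin (k + 1) → M) :
    ∑ j, F (∑ i ∈ Iic j, (Fin.snoc y a : Fin (k + 1) → ℕ) i) j =
      ∑ j : Fin k, F (∑ i ∈ Iic j, y i) j.castSucc + F (∑ i, y i + a) (Fin.last k) := by
  rw [Fin.sum_univ_castSucc, Fin.Iic_last_eq_univ, Fin.sum_snoc]
  simp only [Fin.sum_Iic_castSucc, Fin.snoc_castSucc]

lemma sum_prefixSum_mul_succ_sub {k : ℕ} (y : Fin k → ℕ) (g h : Fin (k + 1) → ℝ)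
    (hgh : ∀ j : Fin k, g j.castSucc = h j.castSucc) :
    ∑ j : Fin k, ((∑ i ∈ Iic j, y i : ℕ) : ℝ) * g j.succ -
      ∑ j : Fin k, ((∑ i ∈ Iic j, y i : ℕ) : ℝ) * h j.succ =
      ((∑ i, y i : ℕ) : ℝ) * (g (Fin.last k) - h (Fin.last k)) := by
  cases k with
  | zero => simp
  | succ k =>
    simp only [Fin.sum_univ_castSucc (n := k), Fin.succ_castSucc, hgh, Fin.succ_last,
      Fin.Iic_last_eq_univ]
    ring

lemma zpow_neg_rpow {τ : ℝ} (hτ : 0 < τ) (m : ℤ) (c : ℝ) :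
    (τ ^ (-m)) ^ c = τ ^ (-(m : ℝ) * c) := by
  rw [← Real.rpow_intCast, ← Real.rpow_mul hτ.le]
  push_cast
  ring_nf

section PolyaMass

variable {K : ℕ}

noncomputable def polyaExp₁ (n : ℕ) {k : ℕ} (βv : Fin k → ℝ) (β : ℝ) (y : Fin k → ℕ) : ℝ :=
  ∑ j : Fin k, ((∑ i ∈ Iic j, y i : ℕ) : ℝ) *
    ((Fin.snoc βv (β - ∑ j, βv j) : Fin (k + 1) → ℝ) j.succ -
      ((Fin.snoc y (n - ∑ j, y j) : Fin (k + 1) → ℕ) j.succ : ℝ))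

noncomputable def polyaExp₂ (n : ℕ) {k : ℕ} (βv : Fin k → ℝ) (y : Fin k → ℕ) : ℝ :=
  ∑ j : Fin k, ((n : ℝ) - ((∑ i ∈ Iic j, y i : ℕ) : ℝ)) * (βv j - y j)

lemma polyaMass_eq {τ₁ τ₂ σ₁ σ₂ : ℝ} (hτ₁ : 0 < τ₁) (hτ₂ : 0 < τ₂) {m : ℤ}
    (hσ₁ : τ₁ ^ (-m) = σ₁) (hσ₂ : τ₂ ^ (-m) = σ₂) (n : ℕ) {k : ℕ} (βv : Fin k → ℝ) (β : ℝ)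
    (y : Fin k → ℕ) :
    polyaMass τ₁ τ₂ m n βv β y =
      σ₁ ^ polyaExp₁ n βv β y * σ₂ ^ polyaExp₂ n βv y * dmulti σ₁ σ₂ n y *
        (∏ j, dfall σ₁ σ₂ (βv j) (y j)) * dfall σ₁ σ₂ (β - ∑ j, βv j) (n - ∑ j, y j) /
        dfall σ₁ σ₂ β n := by
  rw [← hσ₁, ← hσ₂, zpow_neg_rpow hτ₁, zpow_neg_rpow hτ₂]
  simp only [polyaMass, polyaExp₁, polyaExp₂, Fin.prod_univ_castSucc, Fin.snoc_castSucc,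
    Fin.snoc_last]
  ring

lemma polyaExp₁_snoc (n : ℕ) (βv : Fin (K + 1) → ℝ) (β : ℝ) (y : Fin K → ℕ) {a : ℕ}
    (ha : a ≤ n - ∑ j, y j) :
    polyaExp₁ n βv β (Fin.snoc y a) = polyaExp₁ n (fun j => βv j.castSucc) β y +
      a * (β - ∑ j, βv j - (n - ∑ j, y j - a : ℕ)) := by
  have hdiff := sum_prefixSum_mul_succ_sub y
    (fun j => (Fin.snoc (fun j => βv j.castSucc) (β - ∑ j : Fin K, βv j.castSucc) :
      Fin (K + 1) → ℝ) j - ((Fin.snoc y (n - ∑ j, y j) : Fin (K + 1) → ℕ) j : ℝ))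
    (fun j => βv j - ((Fin.snoc y a : Fin (K + 1) → ℕ) j : ℝ)) (fun j => by simp)
  have hlast : β - ∑ j : Fin K, βv j.castSucc = βv (Fin.last K) + (β - ∑ j, βv j) := by
    rw [Fin.sum_univ_castSucc]; ring
  rw [polyaExp₁, sum_prefixSum_snoc y a fun x j => (x : ℝ) *
    ((Fin.snoc βv (β - ∑ j, βv j) : Fin (K + 2) → ℝ) j.succ -
      ((Fin.snoc (Fin.snoc y a) (n - ∑ j, (Fin.snoc y a : Fin (K + 1) → ℕ) j) : Fin (K + 2) → ℕ)
        j.succ : ℝ)), polyaExp₁, Fin.sum_snoc]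
  simp only [Fin.succ_castSucc, Fin.snoc_castSucc, Fin.succ_last, Fin.snoc_last] at hdiff ⊢
  rw [Nat.sub_add_eq]
  push_cast [Nat.cast_sub ha] at hdiff ⊢
  linear_combination (-1 : ℝ) * hdiff - (∑ j, (y j : ℝ)) * hlast

lemma polyaExp₂_snoc (n : ℕ) (βv : Fin (K + 1) → ℝ) (y : Fin K → ℕ) (a : ℕ) :
    polyaExp₂ n βv (Fin.snoc y a) = polyaExp₂ n (fun j => βv j.castSucc) y +
      (n - (∑ j, y j + a) : ℝ) * (βv (Fin.last K) - a) := by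
  rw [polyaExp₂, sum_prefixSum_snoc y a fun x j =>
    ((n : ℝ) - x) * (βv j - ((Fin.snoc y a : Fin (K + 1) → ℕ) j : ℝ)), polyaExp₂]
  simp only [Fin.snoc_castSucc, Fin.snoc_last]
  push_cast
  rfl

end PolyaMass

theorem sum_polyaMass_snoc {τ₁ τ₂ : ℝ} (hτ₂ : 0 < τ₂) (hττ : τ₂ < τ₁) {m : ℤ} (hm : m ≠ 0)
    {n K : ℕ} (βv : Fin (K + 1) → ℝ) (β : ℝ) (y : Fin K → ℕ) (hy : ∑ j, y j ≤ n) :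
    ∑ a ∈ range (n - ∑ j, y j + 1), polyaMass τ₁ τ₂ m n βv β (Fin.snoc y a) =
      polyaMass τ₁ τ₂ m n (fun j => βv j.castSucc) β y := by
  have hτ₁ : 0 < τ₁ := hτ₂.trans hττ
  obtain ⟨σ₁, hσ₁⟩ : ∃ σ, τ₁ ^ (-m) = σ := ⟨_, rfl⟩
  obtain ⟨σ₂, hσ₂⟩ : ∃ σ, τ₂ ^ (-m) = σ := ⟨_, rfl⟩
  have h₁ : 0 < σ₁ := hσ₁ ▸ zpow_pos hτ₁ _
  have h₂ : 0 < σ₂ := hσ₂ ▸ zpow_pos hτ₂ _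
  have hσ : σ₁ ≠ σ₂ := by
    rw [← hσ₁, ← hσ₂, Ne, zpow_left_inj₀ hτ₁.le hτ₂.le (neg_ne_zero.2 hm)]
    exact hττ.ne'
  obtain ⟨N, hN⟩ : ∃ N, n - ∑ j, y j = N := ⟨_, rfl⟩
  obtain ⟨v, hv⟩ : ∃ v, β - ∑ j, βv j = v := ⟨_, rfl⟩
  obtain ⟨C, hC⟩ : ∃ C, C = σ₁ ^ polyaExp₁ n (fun j => βv j.castSucc) β y *
      σ₂ ^ polyaExp₂ n (fun j => βv j.castSucc) y * dmulti σ₁ σ₂ n y *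
      (∏ j : Fin K, dfall σ₁ σ₂ (βv j.castSucc) (y j)) / dfall σ₁ σ₂ β n := ⟨_, rfl⟩
  have hterm : ∀ a ∈ range (N + 1), polyaMass τ₁ τ₂ m n βv β (Fin.snoc y a) =
      C * (dbinom σ₁ σ₂ N a * σ₁ ^ ((a : ℝ) * (v - (N - a : ℕ))) *
        σ₂ ^ (((N - a : ℕ) : ℝ) * (βv (Fin.last K) - a)) * dfall σ₁ σ₂ (βv (Fin.last K)) a *
        dfall σ₁ σ₂ v (N - a)) := by
    intro a ha
    have haN : a ≤ N := Nat.lt_succ_iff.1 (mem_range.1 ha)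
    have hrest : (n - (∑ j, y j + a) : ℝ) = (N - a : ℕ) := by
      rw [← hN, Nat.cast_sub (hN ▸ haN), Nat.cast_sub hy]; ring
    rw [polyaMass_eq hτ₁ hτ₂ hσ₁ hσ₂, polyaExp₁_snoc n βv β y (hN ▸ haN), polyaExp₂_snoc,
      dmulti_snoc, Fin.prod_univ_castSucc, Fin.sum_snoc, hrest, Real.rpow_add h₁,
      Real.rpow_add h₂, Nat.sub_add_eq, ← Nat.cast_sub hy, hN, hv, hC]
    simp only [Fin.snoc_castSucc, Fin.snoc_last]
    ring
  have hmarg : polyaMass τ₁ τ₂ m n (fun j => βv j.castSucc) β y =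
      C * dfall σ₁ σ₂ (β - ∑ j : Fin K, βv j.castSucc) N := by
    rw [polyaMass_eq hτ₁ hτ₂ hσ₁ hσ₂, hN, hC]
    ring
  have hsplit : β - ∑ j : Fin K, βv j.castSucc = βv (Fin.last K) + v := by
    rw [← hv, Fin.sum_univ_castSucc βv]; ring
  rw [hN, sum_congr rfl hterm, ← mul_sum, ← dfall_add_eq_sum h₁ h₂ hσ, ← hsplit, hmarg]

lemma sum_piFinset_snoc {α M : Type*} [AddCommMonoid M] {d : ℕ} (S : Finset α)
    (F : (Fin (d + 1) → α) → M) :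
    ∑ t ∈ Fintype.piFinset fun _ => S, F t =
      ∑ t ∈ Fintype.piFinset fun _ : Fin d => S, ∑ a ∈ S, F (Fin.snoc t a) := by
  have h := filter_piFinset_eq_map_snocEquiv (fun _ : Fin (d + 1) => S) fun _ => True
  simp only [filter_true] at h
  rw [h, sum_map, sum_product, sum_comm]
  rfl

lemma sum_filter_piFinset_snoc {M : Type*} [AddCommMonoid M] {d n c : ℕ} (hc : c ≤ n)
    (F : (Fin (d + 1) → ℕ) → M) :
    ∑ t ∈ (Fintype.piFinset fun _ => range (n + 1)).filter (fun t => ∑ j, t j ≤ c), F t =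
      ∑ t ∈ (Fintype.piFinset fun _ : Fin d => range (n + 1)).filter (fun t => ∑ j, t j ≤ c),
        ∑ a ∈ range (c - ∑ j, t j + 1), F (Fin.snoc t a) := by
  rw [sum_filter, sum_filter, sum_piFinset_snoc]
  refine sum_congr rfl fun t _ => ?_
  simp only [Fin.sum_snoc]
  split_ifs with ht
  · rw [← sum_filter]
    congr 1
    ext a
    simp only [mem_filter, mem_range]
    omega
  · refine sum_eq_zero fun a _ => if_neg (by omega)

theorem sum_polyaMass_append {τ₁ τ₂ : ℝ} (hτ₂ : 0 < τ₂) (hττ : τ₂ < τ₁) {m : ℤ} (hm : m ≠ 0)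
    {n μ : ℕ} (β : ℝ) (y : Fin μ → ℕ) (hy : ∑ j, y j ≤ n) (d : ℕ) (βv : Fin (μ + d) → ℝ) :
    ∑ t ∈ (Fintype.piFinset fun _ : Fin d => range (n + 1)).filter
        (fun t => ∑ j, t j ≤ n - ∑ j, y j),
      polyaMass τ₁ τ₂ m n βv β (Fin.append y t) =
      polyaMass τ₁ τ₂ m n (fun j => βv (Fin.castAdd d j)) β y := by
  induction d with
  | zero =>
    simp [Fin.append_right_nil _ _ rfl]
  | succ d ih =>
    have hsum (t : Fin d → ℕ) : ∑ j, Fin.append y t j = ∑ j, y j + ∑ j, t j := by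
      simp [Fin.sum_univ_add]
    rw [sum_filter_piFinset_snoc (Nat.sub_le _ _)]
    refine Eq.trans ?_ (ih fun j => βv j.castSucc)
    refine sum_congr rfl fun t ht => ?_
    have ht : ∑ j, Fin.append y t j ≤ n := by
      rw [hsum]; have := (mem_filter.1 ht).2; omega
    refine Eq.trans ?_ (sum_polyaMass_snoc (K := μ + d) hτ₂ hττ hm βv β _ ht)
    rw [hsum, Nat.sub_add_eq]
    simp only [Fin.append_snoc]

lemma polyaMass_comp_cast (τ₁ τ₂ : ℝ) (m : ℤ) (n : ℕ) {k k' : ℕ} (h : k = k')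
    (βv : Fin k' → ℝ) (β : ℝ) (y : Fin k' → ℕ) :
    polyaMass τ₁ τ₂ m n (βv ∘ Fin.cast h) β (y ∘ Fin.cast h) = polyaMass τ₁ τ₂ m n βv β y := by
  subst h
  rfl

/-- Marginals of the multivariate deformed Pólya distribution: summing the
`k`-variate mass over the last `k − μ` coordinates (over all tuples with
`y_{μ+1}+⋯+y_k ≤ n − x_μ`, where `x_μ = y₁+⋯+y_μ`) yields the `μ`-variate
deformed Pólya mass with parameters `n`, `(β₁,…,β_μ)`, `β`, `m`. -/
theorem deformed_polya_marginal
    (τ₁ τ₂ : ℝ) (hτ₂ : 0 < τ₂) (hττ : τ₂ < τ₁) (m : ℤ) (hm : m ≠ 0)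
    (n k μ : ℕ) (hμk : μ ≤ k)
    (βv : Fin k → ℝ) (β : ℝ)
    (y : Fin μ → ℕ) (hy : ∑ j, y j ≤ n) :
    ∑ t ∈ (Fintype.piFinset fun _ : Fin (k - μ) => Finset.range (n + 1)).filter
        (fun t => ∑ j, t j ≤ n - ∑ j, y j),
      polyaMass τ₁ τ₂ m n βv β
        (fun j : Fin k =>
          if h : (j : ℕ) < μ then y ⟨(j : ℕ), h⟩
          else t ⟨(j : ℕ) - μ, by have := j.isLt; omega⟩) =
      polyaMass τ₁ τ₂ m n (fun j : Fin μ => βv (Fin.castLE hμk j)) β y := by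
  have hk : k = μ + (k - μ) := by omega
  refine Eq.trans (sum_congr rfl fun t _ => ?_)
    (sum_polyaMass_append hτ₂ hττ hm β y hy (k - μ) (βv ∘ Fin.cast hk.symm))
  rw [← polyaMass_comp_cast τ₁ τ₂ m n hk]
  congr 1
  funext j
  split_ifs with h
  · rw [Function.comp_apply, show Fin.cast hk j = Fin.castAdd (k - μ) ⟨j, h⟩ from rfl,
      Fin.append_left]
  · rw [Function.comp_apply, show Fin.cast hk j = Fin.natAdd μ ⟨j - μ, by omega⟩ from
      Fin.ext (by simp; omega), Fin.append_right]
end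

section
/- Conditional distribution of independent deformed binomial variables given their sum is multivariate deformed hypergeometric: let 0 < τ₂ < τ₁ be reals and θ > 0. For naturals r, s define the deformed binomial mass b_{r,s}(h) = C(r,h) · θ^h · τ₁^{s(r−h) + C(r−h,2)} · τ₂^{s h + C(h,2)} / ∏_{i=0}^{r−1}(τ₁^{s+i} + θ τ₂^{s+i}) for 0 ≤ h ≤ r, where C(t,2) = t(t−1)/2 in the exponents. Let k ≥ 1, let r₁, …, r_{k+1} be naturals with r = r₁ + ⋯ + r_{k+1} and s_j = r₁ + ⋯ + r_j (s₀ = 0), and let h₁, …, h_{k+1} be naturals with h_j ≤ r_j for all j and h₁ + ⋯ + h_{k+1} = n. Then (∏_{j=1}^{k+1} b_{r_j, s_{j−1}}(h_j)) / b_{r,0}(n) = τ₁^{Σ_{j=1}^{k} h_j(z_j − (n − ȳ_j))} · τ₂^{Σ_{j=1}^{k} (n − ȳ_j)(r_j − h_j)} · (∏_{j=1}^{k+1} C(r_j, h_j)) / C(r, n), where z_j = r_{j+1} + ⋯ + r_{k+1} and ȳ_j = h₁ + ⋯ + h_j. -/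
open Finset

/-- The deformed binomial mass of the first kind with parameters `r`, `s`, `θ`:
`b_{r,s}(h) = C(r,h) θ^h τ₁^{s(r−h)+C(r−h,2)} τ₂^{sh+C(h,2)}
  / Π_{i=0}^{r−1}(τ₁^{s+i} + θ τ₂^{s+i})`. -/
noncomputable def binMass (τ₁ τ₂ θ : ℝ) (r s h : ℕ) : ℝ :=
  dbinom τ₁ τ₂ (r : ℝ) h * θ ^ h * τ₁ ^ (s * (r - h) + (r - h).choose 2) *
    τ₂ ^ (s * h + h.choose 2) /
    ∏ i ∈ Finset.range r, (τ₁ ^ (s + i) + θ * τ₂ ^ (s + i))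

/-! The block products in the numerator concatenate to `∏_{i<r} (τ₁^i + θ τ₂^i)`, the denominator
of `b_{r,0}`, because block `j` is shifted by the number `s_{j−1}` of factors before it; the powers
of `θ` cancel too. What remains are powers of `τ₁` and `τ₂`, and by
`C(Σ_j b_j, 2) = Σ_j (C(b_j, 2) + b_j Σ_{i<j} b_i)` their exponents exceed `C(r − n, 2)` and
`C(n, 2)` by the cross terms `Σ_j h_j Σ_{i>j} (r_i − h_i)` and `Σ_j (r_j − h_j) Σ_{i>j} h_i`.
These are the exponents of the claim, as `z_j − (n − ȳ_j) = Σ_{i>j} (r_i − h_i)` and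
`n − ȳ_j = Σ_{i>j} h_i`; the `j = k + 1` terms vanish. -/

lemma dnum_pos_s17 {τ₁ τ₂ x : ℝ} (hτ₂ : 0 < τ₂) (hττ : τ₂ < τ₁) (hx : 0 < x) :
    0 < dnum τ₁ τ₂ x :=
  div_pos (sub_pos.2 (Real.rpow_lt_rpow hτ₂.le hττ hx)) (sub_pos.2 hττ)

lemma dbinom_natCast_pos {τ₁ τ₂ : ℝ} (hτ₂ : 0 < τ₂) (hττ : τ₂ < τ₁) {m h : ℕ} (hle : h ≤ m) :
    0 < dbinom τ₁ τ₂ m h := by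
  refine div_pos (prod_pos fun i hi => dnum_pos_s17 hτ₂ hττ ?_)
    (prod_pos fun i _ => dnum_pos_s17 hτ₂ hττ (by positivity))
  have : (i : ℝ) < m := by exact_mod_cast (mem_range.1 hi).trans_le hle
  linarith

namespace Fin

@[to_additive]
lemma prod_prod_range_add_sum_Iio {M : Type*} [CommMonoid M] (f : ℕ → M) {m : ℕ}
    (g : Fin m → ℕ) :
    ∏ j, ∏ i ∈ range (g j), f (∑ l ∈ Iio j, g l + i) = ∏ i ∈ range (∑ j, g j), f i := by
  induction m with
  | zero => simp
  | succ m ih =>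
    rw [prod_univ_castSucc, sum_univ_castSucc, prod_range_add, Iio_last_eq_map, sum_map,
      ← ih (fun j => g j.castSucc)]
    congr 1
    refine prod_congr rfl fun j _ => ?_
    rw [Iio_castSucc, sum_map]
    rfl

lemma choose_two_sum {m : ℕ} (b : Fin m → ℕ) :
    (∑ j, b j).choose 2 = ∑ j, ((∑ i ∈ Iio j, b i) * b j + (b j).choose 2) := by
  rw [Nat.choose_two_right, ← sum_range_id, ← sum_sum_range_add_sum_Iio (fun i => i) b]
  refine sum_congr rfl fun j _ => ?_
  rw [sum_add_distrib, sum_range_id, ← Nat.choose_two_right]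
  simp [mul_comm]

lemma sum_sum_Iio_mul {R : Type*} [NonUnitalNonAssocSemiring R] {m : ℕ} (a b : Fin m → R) :
    ∑ j, (∑ i ∈ Iio j, a i) * b j = ∑ i, a i * ∑ j ∈ Ioi i, b j := by
  simp_rw [sum_mul, mul_sum]
  exact sum_comm' (by simp)

lemma sum_sum_Iio_add_mul_add_choose_two {m : ℕ} (a b : Fin m → ℕ) :
    ∑ j, ((∑ i ∈ Iio j, (a i + b i)) * b j + (b j).choose 2) =
      (∑ j, b j).choose 2 + ∑ j, a j * ∑ i ∈ Ioi j, b i := by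
  rw [choose_two_sum, ← sum_sum_Iio_mul]
  simp_rw [sum_add_distrib, add_mul, sum_add_distrib]
  ring

lemma sum_Iic_add_sum_Ioi {M : Type*} [AddCommMonoid M] {m : ℕ} (f : Fin m → M) (j : Fin m) :
    ∑ i ∈ Iic j, f i + ∑ i ∈ Ioi j, f i = ∑ i, f i := by
  rw [add_comm, ← sum_compl_add_sum (Iic j)]
  congr 2
  ext; simp

lemma sum_castSucc_mul_sum_Ioi {R : Type*} [NonUnitalNonAssocSemiring R] {k : ℕ}
    (u v : Fin (k + 1) → R) :
    ∑ j : Fin k, u j.castSucc * ∑ i ∈ Ioi j.castSucc, v i = ∑ j, u j * ∑ i ∈ Ioi j, v i := by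
  rw [sum_univ_castSucc (fun j => u j * ∑ i ∈ Ioi j, v i)]
  simp [Fin.top_eq_last]

end Fin

section binMass

variable {τ₁ τ₂ θ : ℝ} {m : ℕ} (r h : Fin m → ℕ)

lemma prod_binMass :
    ∏ j, binMass τ₁ τ₂ θ (r j) (∑ i ∈ Iio j, r i) (h j) =
      (∏ j, dbinom τ₁ τ₂ (r j) (h j)) * θ ^ (∑ j, h j) *
        τ₁ ^ (∑ j, ((∑ i ∈ Iio j, r i) * (r j - h j) + (r j - h j).choose 2)) *
        τ₂ ^ (∑ j, ((∑ i ∈ Iio j, r i) * h j + (h j).choose 2)) /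
        ∏ i ∈ range (∑ j, r j), (τ₁ ^ i + θ * τ₂ ^ i) := by
  simp only [binMass, prod_div_distrib, prod_mul_distrib, prod_pow_eq_pow_sum,
    Fin.prod_prod_range_add_sum_Iio (fun i => τ₁ ^ i + θ * τ₂ ^ i)]

variable {r h}

lemma prod_binMass_div_binMass (hτ₂ : 0 < τ₂) (hττ : τ₂ < τ₁) (hθ : 0 < θ)
    (hle : ∀ j, h j ≤ r j) :
    (∏ j, binMass τ₁ τ₂ θ (r j) (∑ i ∈ Iio j, r i) (h j)) /
        binMass τ₁ τ₂ θ (∑ j, r j) 0 (∑ j, h j) =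
      τ₁ ^ (∑ j, h j * ∑ i ∈ Ioi j, (r i - h i)) * τ₂ ^ (∑ j, (r j - h j) * ∑ i ∈ Ioi j, h i) *
        (∏ j, dbinom τ₁ τ₂ (r j) (h j)) / dbinom τ₁ τ₂ (∑ j, r j : ℕ) (∑ j, h j) := by
  have hτ₁ : 0 < τ₁ := hτ₂.trans hττ
  have hsum : ∑ j, h j ≤ ∑ j, r j := sum_le_sum fun j _ => hle j
  have hD : 0 < ∏ i ∈ range (∑ j, r j), (τ₁ ^ i + θ * τ₂ ^ i) :=
    prod_pos fun i _ => by positivity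
  have hQ := dbinom_natCast_pos hτ₂ hττ hsum
  have hexp₁ : ∑ j, ((∑ i ∈ Iio j, r i) * (r j - h j) + (r j - h j).choose 2) =
      (∑ j, r j - ∑ j, h j).choose 2 + ∑ j, h j * ∑ i ∈ Ioi j, (r i - h i) := by
    rw [← sum_tsub_distrib _ fun j _ => hle j, ← Fin.sum_sum_Iio_add_mul_add_choose_two]
    simp only [Nat.add_sub_cancel' (hle _)]
  have hexp₂ : ∑ j, ((∑ i ∈ Iio j, r i) * h j + (h j).choose 2) =
      (∑ j, h j).choose 2 + ∑ j, (r j - h j) * ∑ i ∈ Ioi j, h i := by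
    rw [← Fin.sum_sum_Iio_add_mul_add_choose_two]
    simp only [Nat.sub_add_cancel (hle _)]
  rw [prod_binMass, hexp₁, hexp₂]
  simp only [binMass, zero_mul, zero_add, pow_add]
  field_simp

end binMass

theorem deformed_binomial_conditional_hypergeometric_general
    (τ₁ τ₂ : ℝ) (hτ₂ : 0 < τ₂) (hττ : τ₂ < τ₁) (θ : ℝ) (hθ : 0 < θ)
    (k n : ℕ) (r hv : Fin (k + 1) → ℕ)
    (hle : ∀ j, hv j ≤ r j) (hn : ∑ j, hv j = n) :
    (∏ j : Fin (k + 1), binMass τ₁ τ₂ θ (r j) (∑ i ∈ Finset.Iio j, r i) (hv j)) /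
        binMass τ₁ τ₂ θ (∑ j, r j) 0 n =
      τ₁ ^ (∑ j : Fin k, (hv j.castSucc : ℝ) *
          ((∑ i ∈ Finset.univ.filter fun i : Fin (k + 1) => (j : ℕ) < (i : ℕ), (r i : ℝ)) -
            ((n : ℝ) - (∑ i ∈ Finset.Iic j.castSucc, (hv i : ℝ))))) *
        τ₂ ^ (∑ j : Fin k, ((n : ℝ) - (∑ i ∈ Finset.Iic j.castSucc, (hv i : ℝ))) *
            ((r j.castSucc : ℝ) - (hv j.castSucc : ℝ))) *
        (∏ j : Fin (k + 1), dbinom τ₁ τ₂ (r j : ℝ) (hv j)) /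
        dbinom τ₁ τ₂ ((∑ j, r j : ℕ) : ℝ) n := by
  subst hn
  have hfilter (j : Fin k) :
      univ.filter (fun i : Fin (k + 1) => (j : ℕ) < i) = Ioi j.castSucc := by
    ext; simp [Fin.lt_def]
  have htail (j : Fin (k + 1)) :
      ((∑ i, hv i : ℕ) : ℝ) - ∑ i ∈ Iic j, (hv i : ℝ) = ∑ i ∈ Ioi j, (hv i : ℝ) := by
    rw [Nat.cast_sum, ← Fin.sum_Iic_add_sum_Ioi _ j, add_sub_cancel_left]
  have hexp₁ : ∑ j : Fin k, (hv j.castSucc : ℝ) *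
        ((∑ i ∈ univ.filter fun i : Fin (k + 1) => (j : ℕ) < i, (r i : ℝ)) -
          (((∑ i, hv i : ℕ) : ℝ) - ∑ i ∈ Iic j.castSucc, (hv i : ℝ))) =
      ((∑ j, hv j * ∑ i ∈ Ioi j, (r i - hv i) : ℕ) : ℝ) := by
    simp_rw [hfilter, htail, ← sum_sub_distrib]
    rw [Fin.sum_castSucc_mul_sum_Ioi (fun j => (hv j : ℝ)) fun i => (r i : ℝ) - hv i]
    simp [Nat.cast_sub (hle _)]
  have hexp₂ : ∑ j : Fin k, (((∑ i, hv i : ℕ) : ℝ) - ∑ i ∈ Iic j.castSucc, (hv i : ℝ)) *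
        ((r j.castSucc : ℝ) - hv j.castSucc) =
      ((∑ j, (r j - hv j) * ∑ i ∈ Ioi j, hv i : ℕ) : ℝ) := by
    simp_rw [htail, mul_comm (∑ i ∈ Ioi _, _)]
    rw [Fin.sum_castSucc_mul_sum_Ioi (fun j => (r j : ℝ) - hv j) fun i => (hv i : ℝ)]
    simp [Nat.cast_sub (hle _)]
  rw [hexp₁, hexp₂, Real.rpow_natCast, Real.rpow_natCast,
    prod_binMass_div_binMass hτ₂ hττ hθ hle]

/-- Conditional distribution of independent deformed binomial variables given
their sum is multivariate deformed hypergeometric: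
`(Π_{j=1}^{k+1} b_{r_j,s_{j−1}}(h_j)) / b_{r,0}(n)
  = τ₁^{Σ_j h_j(z_j−(n−ȳ_j))} τ₂^{Σ_j (n−ȳ_j)(r_j−h_j)}
    (Π_j C(r_j,h_j)) / C(r,n)`,
where `r = r₁+⋯+r_{k+1}`, `s_j = r₁+⋯+r_j`, `z_j = r_{j+1}+⋯+r_{k+1}`,
`ȳ_j = h₁+⋯+h_j`, `h_j ≤ r_j` and `h₁+⋯+h_{k+1} = n`. -/
theorem deformed_binomial_conditional_hypergeometric
    (τ₁ τ₂ : ℝ) (hτ₂ : 0 < τ₂) (hττ : τ₂ < τ₁) (θ : ℝ) (hθ : 0 < θ)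
    (k n : ℕ) (hk : 1 ≤ k) (r hv : Fin (k + 1) → ℕ)
    (hle : ∀ j, hv j ≤ r j) (hn : ∑ j, hv j = n) :
    (∏ j : Fin (k + 1), binMass τ₁ τ₂ θ (r j) (∑ i ∈ Finset.Iio j, r i) (hv j)) /
        binMass τ₁ τ₂ θ (∑ j, r j) 0 n =
      τ₁ ^ (∑ j : Fin k, (hv j.castSucc : ℝ) *
          ((∑ i ∈ Finset.univ.filter fun i : Fin (k + 1) => (j : ℕ) < (i : ℕ), (r i : ℝ)) -
            ((n : ℝ) - (∑ i ∈ Finset.Iic j.castSucc, (hv i : ℝ))))) *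
        τ₂ ^ (∑ j : Fin k, ((n : ℝ) - (∑ i ∈ Finset.Iic j.castSucc, (hv i : ℝ))) *
            ((r j.castSucc : ℝ) - (hv j.castSucc : ℝ))) *
        (∏ j : Fin (k + 1), dbinom τ₁ τ₂ (r j : ℝ) (hv j)) /
        dbinom τ₁ τ₂ ((∑ j, r j : ℕ) : ℝ) n :=
  deformed_binomial_conditional_hypergeometric_general τ₁ τ₂ hτ₂ hττ θ hθ k n r hv hle hn
end

section
/- Conditional distribution of independent deformed negative binomial variables given their sum is multivariate negative deformed hypergeometric: let 0 < τ₂ < τ₁ be reals and 0 < θ < 1. For naturals r ≥ 1 and s define the deformed negative binomial mass g_{r,s}(v) = C(r+v−1, v) · θ^v · τ₂^{s v} · τ₁^{−v(r+s−1)} · ∏_{i=0}^{r−1}(1 − θ(τ₂/τ₁)^{s+i}) for v ∈ ℕ. Let k ≥ 1, let r₁, …, r_{k+1} be naturals each ≥ 1 with r = r₁ + ⋯ + r_{k+1} and s_j = r₁ + ⋯ + r_j (s₀ = 0), and let v₁, …, v_{k+1} be naturals with v₁ + ⋯ + v_{k+1} = n. Then (∏_{j=1}^{k+1} g_{r_j,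 s_{j−1}}(v_j)) / g_{r,0}(n) = τ₁^{Σ_{j=1}^{k} v_j z_j} · τ₂^{Σ_{j=1}^{k} r_j(n − v̄_j)} · (∏_{j=1}^{k+1} C(r_j + v_j − 1, v_j)) / C(r + n − 1, n), where z_j = r_{j+1} + ⋯ + r_{k+1} and v̄_j = v₁ + ⋯ + v_j. -/
open Finset

/-- The deformed negative binomial mass of the second kind with parameters
`r ≥ 1`, `s`, `θ`:
`g_{r,s}(v) = C(r+v−1,v) θ^v τ₂^{sv} τ₁^{−v(r+s−1)}
  Π_{i=0}^{r−1}(1 − θ(τ₂/τ₁)^{s+i})`. -/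
noncomputable def negBinMass (τ₁ τ₂ θ : ℝ) (r s v : ℕ) : ℝ :=
  dbinom τ₁ τ₂ ((r : ℝ) + (v : ℝ) - 1) v * θ ^ v * τ₂ ^ (s * v) *
    τ₁ ^ (-((v * (r + s - 1) : ℕ) : ℤ)) *
    ∏ i ∈ Finset.range r, (1 - θ * (τ₂ / τ₁) ^ (s + i))

/-! Each mass `g_{r_j, s_{j-1}}(v_j)` is a deformed binomial coefficient times `θ ^ v_j`, powers of
`τ₂` and `τ₁`, and the block `∏_{i < r_j} (1 - θ (τ₂/τ₁)^(s_{j-1} + i))`. Over `j` these blocks tile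
`∏_{i < r} (1 - θ (τ₂/τ₁)^i)` and the `θ ^ v_j` multiply to `θ ^ n`, so both cancel against
`g_{r,0}(n)`. What remains are two identities of exponents: `∑ s_{j-1} v_j = ∑ r_j (n - v̄_j)` by
exchanging the order of summation, and `n (r - 1) = ∑ v_j (r_j + s_{j-1} - 1) + ∑ v_j z_j` since
`s_{j-1} + r_j + z_j = r`. -/

section IntervalSums

variable {α M : Type*} [Fintype α] [LinearOrder α] [LocallyFiniteOrderBot α]
    [LocallyFiniteOrderTop α] [AddCommMonoid M]

theorem Finset.sum_Iic_add_sum_Ioi (f : α → M) (c : α) :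
    ∑ i ∈ Iic c, f i + ∑ i ∈ Ioi c, f i = ∑ i, f i := by
  classical
  rw [← sum_filter_add_sum_filter_not univ (· ≤ c)]
  congr 2 <;> ext i <;> simp

theorem Finset.sum_Iio_add_add_sum_Ioi (f : α → M) (c : α) :
    ∑ i ∈ Iio c, f i + f c + ∑ i ∈ Ioi c, f i = ∑ i, f i := by
  classical
  rw [← sum_Iic_add_sum_Ioi f c, ← Iio_insert, sum_insert (by simp), add_comm (f c)]

theorem Finset.sum_sum_Iio_mul {R : Type*} [NonUnitalNonAssocSemiring R] (a b : α → R) :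
    ∑ j, (∑ i ∈ Iio j, a i) * b j = ∑ i, a i * ∑ j ∈ Ioi i, b j := by
  simp only [sum_mul, mul_sum]
  exact sum_comm' fun j i => by simp

end IntervalSums

theorem Fin.sum_castSucc_mul_sum_Ioi_s18 {R : Type*} [NonUnitalNonAssocSemiring R] {m : ℕ}
    (a b : Fin (m + 1) → R) :
    ∑ j : Fin m, a j.castSucc * ∑ i ∈ Ioi j.castSucc, b i = ∑ j, a j * ∑ i ∈ Ioi j, b i := by
  simp [Fin.sum_univ_castSucc, ← Fin.top_eq_last]

theorem Fin.prod_range_sum_eq_prod_prod_range {M : Type*} [CommMonoid M] (f : ℕ → M) :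
    ∀ {m : ℕ} (r : Fin m → ℕ),
      ∏ i ∈ range (∑ j, r j), f i = ∏ j, ∏ i ∈ range (r j), f (∑ t ∈ Iio j, r t + i)
  | 0, _ => by simp
  | m + 1, r => by
    rw [Fin.prod_univ_castSucc, Fin.sum_univ_castSucc, prod_range_add,
      Fin.prod_range_sum_eq_prod_prod_range f (fun j => r j.castSucc), Iio_last_eq_map, sum_map]
    simp only [Fin.sum_Iio_castSucc]
    rfl

section Exponents

variable {k n : ℕ} (r v : Fin (k + 1) → ℕ)

theorem sum_sum_Iio_mul_eq_sum_mul_sub_sum_Iic (hn : ∑ j, v j = n) :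
    ∑ j, (∑ i ∈ Iio j, r i) * v j =
      ∑ j : Fin k, r j.castSucc * (n - ∑ i ∈ Iic j.castSucc, v i) := by
  rw [sum_sum_Iio_mul, ← Fin.sum_castSucc_mul_sum_Ioi_s18]
  refine sum_congr rfl fun j _ => congrArg (r j.castSucc * ·) ?_
  have := sum_Iic_add_sum_Ioi v j.castSucc
  omega

theorem mul_sum_sub_one_eq (hr : ∀ j, 1 ≤ r j) (hn : ∑ j, v j = n) :
    n * (∑ j, r j - 1) =
      ∑ j, v j * (r j + ∑ i ∈ Iio j, r i - 1) +
        ∑ j : Fin k, v j.castSucc * ∑ i ∈ univ.filter fun i : Fin (k + 1) => (j : ℕ) < i, r i := by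
  have hfilter (j : Fin k) : univ.filter (fun i : Fin (k + 1) => (j : ℕ) < i) = Ioi j.castSucc := by
    ext i; simp [Fin.lt_def]
  simp only [hfilter]
  rw [Fin.sum_castSucc_mul_sum_Ioi_s18, ← sum_add_distrib, ← hn, sum_mul]
  simp only [← mul_add]
  refine sum_congr rfl fun j _ => congrArg (v j * ·) ?_
  have := sum_Iio_add_add_sum_Ioi r j
  have := hr j
  omega

end Exponents

section Mass

variable (τ₁ τ₂ θ : ℝ)

theorem negBinMass_eq (r s v : ℕ) :
    negBinMass τ₁ τ₂ θ r s v =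
      dbinom τ₁ τ₂ ((r : ℝ) + (v : ℝ) - 1) v * θ ^ v * τ₂ ^ (s * v) *
        (∏ i ∈ range r, (1 - θ * (τ₂ / τ₁) ^ (s + i))) / τ₁ ^ (v * (r + s - 1)) := by
  rw [negBinMass, zpow_neg, zpow_natCast, div_eq_mul_inv]
  ring

theorem prod_negBinMass {m : ℕ} (r v : Fin m → ℕ) :
    ∏ j, negBinMass τ₁ τ₂ θ (r j) (∑ i ∈ Iio j, r i) (v j) =
      (∏ j, dbinom τ₁ τ₂ ((r j : ℝ) + (v j : ℝ) - 1) (v j)) * θ ^ (∑ j, v j) *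
        τ₂ ^ (∑ j, (∑ i ∈ Iio j, r i) * v j) *
        (∏ i ∈ range (∑ j, r j), (1 - θ * (τ₂ / τ₁) ^ i)) /
        τ₁ ^ (∑ j, v j * (r j + ∑ i ∈ Iio j, r i - 1)) := by
  simp only [negBinMass_eq, prod_div_distrib, prod_mul_distrib, prod_pow_eq_pow_sum,
    Fin.prod_range_sum_eq_prod_prod_range]

end Mass

theorem prod_one_sub_mul_pow_pos {θ ρ : ℝ} (hθ : θ < 1) (hρ₀ : 0 ≤ ρ) (hρ₁ : ρ ≤ 1) (N : ℕ) :
    0 < ∏ i ∈ range N, (1 - θ * ρ ^ i) := by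
  refine prod_pos fun i _ => sub_pos.2 ?_
  have := pow_le_one₀ hρ₀ hρ₁ (n := i)
  have := pow_nonneg hρ₀ i
  rcases le_or_gt θ 0 with hθ₀ | hθ₀ <;> nlinarith

theorem deformed_negative_binomial_conditional_hypergeometric_general
    (τ₁ τ₂ : ℝ) (hτ₂ : 0 < τ₂) (hττ : τ₂ < τ₁) (θ : ℝ) (hθ₀ : 0 < θ) (hθ₁ : θ < 1)
    (k n : ℕ) (r v : Fin (k + 1) → ℕ)
    (hr : ∀ j, 1 ≤ r j) (hn : ∑ j, v j = n) :
    (∏ j : Fin (k + 1), negBinMass τ₁ τ₂ θ (r j) (∑ i ∈ Finset.Iio j, r i) (v j)) /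
        negBinMass τ₁ τ₂ θ (∑ j, r j) 0 n =
      τ₁ ^ (∑ j : Fin k, v j.castSucc *
          (∑ i ∈ Finset.univ.filter fun i : Fin (k + 1) => (j : ℕ) < (i : ℕ), r i)) *
        τ₂ ^ (∑ j : Fin k, r j.castSucc * (n - ∑ i ∈ Finset.Iic j.castSucc, v i)) *
        (∏ j : Fin (k + 1), dbinom τ₁ τ₂ ((r j : ℝ) + (v j : ℝ) - 1) (v j)) /
        dbinom τ₁ τ₂ (((∑ j, r j : ℕ) : ℝ) + (n : ℝ) - 1) n := by
  have hτ₁ : 0 < τ₁ := hτ₂.trans hττ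
  have hP := prod_one_sub_mul_pow_pos hθ₁ (div_pos hτ₂ hτ₁).le
    ((div_le_one hτ₁).2 hττ.le) (∑ j, r j)
  rw [prod_negBinMass, negBinMass_eq, hn, sum_sum_Iio_mul_eq_sum_mul_sub_sum_Iic r v hn]
  simp only [zero_mul, zero_add, add_zero, pow_zero, mul_one]
  rw [mul_sum_sub_one_eq r v hr hn, pow_add]
  field_simp [hP.ne', hθ₀.ne', hτ₁.ne']

/-- Conditional distribution of independent deformed negative binomial
variables given their sum is multivariate negative deformed hypergeometric:
`(Π_{j=1}^{k+1} g_{r_j,s_{j−1}}(v_j)) / g_{r,0}(n)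
  = τ₁^{Σ_j v_j z_j} τ₂^{Σ_j r_j(n−v̄_j)}
    (Π_j C(r_j+v_j−1, v_j)) / C(r+n−1, n)`,
where `r = r₁+⋯+r_{k+1}`, each `r_j ≥ 1`, `s_j = r₁+⋯+r_j`,
`z_j = r_{j+1}+⋯+r_{k+1}`, `v̄_j = v₁+⋯+v_j` and `v₁+⋯+v_{k+1} = n`. -/
theorem deformed_negative_binomial_conditional_hypergeometric
    (τ₁ τ₂ : ℝ) (hτ₂ : 0 < τ₂) (hττ : τ₂ < τ₁) (θ : ℝ) (hθ₀ : 0 < θ) (hθ₁ : θ < 1)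
    (k n : ℕ) (hk : 1 ≤ k) (r v : Fin (k + 1) → ℕ)
    (hr : ∀ j, 1 ≤ r j) (hn : ∑ j, v j = n) :
    (∏ j : Fin (k + 1), negBinMass τ₁ τ₂ θ (r j) (∑ i ∈ Finset.Iio j, r i) (v j)) /
        negBinMass τ₁ τ₂ θ (∑ j, r j) 0 n =
      τ₁ ^ (∑ j : Fin k, v j.castSucc *
          (∑ i ∈ Finset.univ.filter fun i : Fin (k + 1) => (j : ℕ) < (i : ℕ), r i)) *
        τ₂ ^ (∑ j : Fin k, r j.castSucc * (n - ∑ i ∈ Finset.Iic j.castSucc, v i)) *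
        (∏ j : Fin (k + 1), dbinom τ₁ τ₂ ((r j : ℝ) + (v j : ℝ) - 1) (v j)) /
        dbinom τ₁ τ₂ (((∑ j, r j : ℕ) : ℝ) + (n : ℝ) - 1) n :=
  deformed_negative_binomial_conditional_hypergeometric_general τ₁ τ₂ hτ₂ hττ θ hθ₀ hθ₁ k n r v hr
    hn
end

section
/- Normalization of the deformed negative binomial distribution of the second kind (deformed negative binomial series): let 0 < τ₂ < τ₁ be reals, let 0 < θ < 1, and let r ≥ 1 and s be naturals. Then the series Σ_{v=0}^{∞} C(r + v − 1, v) · θ^v · τ₂^{s v} · τ₁^{−v(r+s−1)} converges and equals ∏_{i=0}^{r−1} (1 − θ(τ₂/τ₁)^{s+i})^{−1}, where C(r+v−1, v) is the deformed binomial coefficient. -/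
open Finset

/-! With `q = τ₂ / τ₁` one has `[n] = τ₁ ^ n (1 - q ^ n) / (τ₁ - τ₂)` for natural `n`, so
`C(m + v, v) = τ₁ ^ (m v)` times the Gaussian binomial `[m + v, v]_q`, and for `r = m + 1` the
`v`-th term of the series is `[m + v, v]_q x ^ v` with `x = θ q ^ s`. The identity
`∑ [m + v, v]_q x ^ v = ∏_{i ≤ m} (1 - x q ^ i)⁻¹` follows by induction on `m`: since
`[m + 1 + v, v]_q = ∑_{k ≤ v} q ^ k [m + k, k]_q`, the series for `m + 1` at `x` is the Cauchy
product of the series for `m` at `q x` with the geometric series `∑ x ^ v`. -/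

/-- `gaussBinom q r v` is the Gaussian binomial coefficient `[r + v, v]_q`. -/
def gaussBinom {R : Type*} [CommRing R] (q : R) : ℕ → ℕ → R
  | 0, _ => 1
  | _ + 1, 0 => 1
  | r + 1, v + 1 => gaussBinom q (r + 1) v + q ^ (v + 1) * gaussBinom q r (v + 1)

section gaussBinom

variable {R : Type*} [CommRing R] (q : R)

@[simp]
theorem gaussBinom_zero_left (v : ℕ) : gaussBinom q 0 v = 1 := by
  cases v <;> simp [gaussBinom]

@[simp]
theorem gaussBinom_zero_right (r : ℕ) : gaussBinom q r 0 = 1 := by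
  cases r <;> simp [gaussBinom]

theorem gaussBinom_succ_succ (r v : ℕ) :
    gaussBinom q (r + 1) (v + 1)
      = gaussBinom q (r + 1) v + q ^ (v + 1) * gaussBinom q r (v + 1) := by
  rw [gaussBinom]

theorem gaussBinom_succ_left (r v : ℕ) :
    gaussBinom q (r + 1) v = ∑ k ∈ range (v + 1), q ^ k * gaussBinom q r k := by
  induction v with
  | zero => simp
  | succ v ih => rw [gaussBinom_succ_succ, ih, sum_range_succ _ (v + 1)]

theorem gaussBinom_mul_prod (r v : ℕ) :
    gaussBinom q r v * ∏ j ∈ range v, (1 - q ^ (j + 1))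
      = ∏ j ∈ range v, (1 - q ^ (r + j + 1)) := by
  induction r generalizing v with
  | zero => simp
  | succ r ihr =>
    induction v with
    | zero => simp
    | succ v ihv =>
      have hshift : ∏ j ∈ range (v + 1), (1 - q ^ (r + j + 1))
          = (1 - q ^ (r + 1)) * ∏ j ∈ range v, (1 - q ^ (r + 1 + j + 1)) := by
        rw [prod_range_succ', mul_comm]
        congr 1
        refine prod_congr rfl fun j _ => ?_
        ring
      have hr := ihr (v + 1)
      rw [prod_range_succ, hshift] at hr
      rw [gaussBinom_succ_succ, prod_range_succ, prod_range_succ]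
      linear_combination (1 - q ^ (v + 1)) * ihv + q ^ (v + 1) * hr

theorem gaussBinom_succ_left_mul_pow (r v : ℕ) (x : R) :
    ∑ k ∈ range (v + 1), gaussBinom q r k * (q * x) ^ k * x ^ (v - k)
      = gaussBinom q (r + 1) v * x ^ v := by
  rw [gaussBinom_succ_left, sum_mul]
  refine sum_congr rfl fun k hk => ?_
  rw [mul_pow, ← pow_sub_mul_pow x (Nat.le_of_lt_succ (mem_range.1 hk))]
  ring

end gaussBinom

theorem gaussBinom_eq_prod_div {K : Type*} [Field K] (q : K) (r v : ℕ)
    (hq : ∀ j < v, 1 - q ^ (j + 1) ≠ 0) :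
    gaussBinom q r v = ∏ j ∈ range v, (1 - q ^ (r + j + 1)) / (1 - q ^ (j + 1)) := by
  rw [prod_div_distrib, ← gaussBinom_mul_prod, mul_div_cancel_right₀]
  exact prod_ne_zero_iff.2 fun j hj => hq j (mem_range.1 hj)

theorem hasSum_gaussBinom_mul_pow {q : ℝ} (hq₀ : 0 ≤ q) (hq₁ : q ≤ 1) (r : ℕ) {x : ℝ}
    (hx₀ : 0 ≤ x) (hx₁ : x < 1) :
    HasSum (fun v => gaussBinom q r v * x ^ v) (∏ i ∈ range (r + 1), (1 - x * q ^ i)⁻¹) := by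
  induction r generalizing x with
  | zero => simpa using hasSum_geometric_of_lt_one hx₀ hx₁
  | succ r ih =>
    have hqx : q * x < 1 := (mul_le_of_le_one_left hx₀ hq₁).trans_lt hx₁
    have hf := ih (mul_nonneg hq₀ hx₀) hqx
    have hg := hasSum_geometric_of_lt_one hx₀ hx₁
    have hfg := hasSum_sum_range_mul_of_summable_norm
      (f := fun v => gaussBinom q r v * (q * x) ^ v) (g := (x ^ ·)) hf.summable.abs hg.summable.abs
    simp only [hf.tsum_eq, hg.tsum_eq, gaussBinom_succ_left_mul_pow] at hfg
    have hprod : (∏ i ∈ range (r + 1), (1 - q * x * q ^ i)⁻¹) * (1 - x)⁻¹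
        = ∏ i ∈ range (r + 1 + 1), (1 - x * q ^ i)⁻¹ := by
      rw [prod_range_succ' _ (r + 1), pow_zero, mul_one]
      congr 1
      refine prod_congr rfl fun i _ => ?_
      ring
    rwa [hprod] at hfg

section deformed

variable {τ₁ τ₂ : ℝ}

theorem dnum_natCast (hτ₁ : τ₁ ≠ 0) (n : ℕ) :
    dnum τ₁ τ₂ n = τ₁ ^ n * (1 - (τ₂ / τ₁) ^ n) / (τ₁ - τ₂) := by
  rw [dnum, Real.rpow_natCast, Real.rpow_natCast, div_pow, mul_sub, mul_one,
    mul_div_cancel₀ _ (pow_ne_zero n hτ₁)]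

theorem dnum_natCast_add_div (hτ₁ : τ₁ ≠ 0) (hττ : τ₁ - τ₂ ≠ 0) (m n : ℕ) :
    dnum τ₁ τ₂ ↑(m + n) / dnum τ₁ τ₂ n
      = τ₁ ^ m * ((1 - (τ₂ / τ₁) ^ (m + n)) / (1 - (τ₂ / τ₁) ^ n)) := by
  rw [dnum_natCast hτ₁, dnum_natCast hτ₁, div_div_div_cancel_right₀ hττ, pow_add, mul_assoc,
    mul_div_assoc, mul_div_mul_left _ _ (pow_ne_zero n hτ₁)]

theorem dfall_add_natCast (x : ℝ) (v : ℕ) :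
    dfall τ₁ τ₂ (x + v) v = ∏ j ∈ range v, dnum τ₁ τ₂ (x + ↑(j + 1)) := by
  rw [dfall, ← prod_range_reflect]
  refine prod_congr rfl fun j hj => ?_
  rw [Nat.sub_sub, Nat.cast_sub (by have := mem_range.1 hj; omega)]
  congr 1
  push_cast
  ring

theorem dbinom_natCast_add (hτ₂ : 0 ≤ τ₂) (hττ : τ₂ < τ₁) (m v : ℕ) :
    dbinom τ₁ τ₂ (m + v) v = τ₁ ^ (m * v) * gaussBinom (τ₂ / τ₁) m v := by
  have hτ₁ : 0 < τ₁ := hτ₂.trans_lt hττ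
  have hq : ∀ j : ℕ, 1 - (τ₂ / τ₁) ^ (j + 1) ≠ 0 := fun j =>
    (sub_pos.2 (pow_lt_one₀ (by positivity) ((div_lt_one hτ₁).2 hττ) j.succ_ne_zero)).ne'
  have hpow : τ₁ ^ (m * v) = ∏ _j ∈ range v, τ₁ ^ m := by rw [prod_const, card_range, pow_mul]
  rw [dbinom, dfall_add_natCast, dfac, ← prod_div_distrib,
    gaussBinom_eq_prod_div _ _ _ fun j _ => hq j, hpow, ← prod_mul_distrib]
  refine prod_congr rfl fun j _ => ?_
  rw [← Nat.cast_add, ← Nat.cast_succ]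
  exact dnum_natCast_add_div hτ₁.ne' (sub_pos.2 hττ).ne' m (j + 1)

end deformed

/-- Normalization of the deformed negative binomial distribution of the second
kind (deformed negative binomial series): for `0 < θ < 1` and `r ≥ 1`,
`Σ_{v=0}^{∞} C(r+v−1, v) θ^v τ₂^{sv} τ₁^{−v(r+s−1)}
  = Π_{i=0}^{r−1} (1 − θ(τ₂/τ₁)^{s+i})⁻¹`, the series being convergent. -/
theorem deformed_negative_binomial_series
    (τ₁ τ₂ : ℝ) (hτ₂ : 0 < τ₂) (hττ : τ₂ < τ₁) (θ : ℝ) (hθ₀ : 0 < θ) (hθ₁ : θ < 1)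
    (r s : ℕ) (hr : 1 ≤ r) :
    HasSum
      (fun v : ℕ =>
        dbinom τ₁ τ₂ ((r : ℝ) + (v : ℝ) - 1) v * θ ^ v * τ₂ ^ (s * v) *
          τ₁ ^ (-((v * (r + s - 1) : ℕ) : ℤ)))
      (∏ i ∈ Finset.range r, (1 - θ * (τ₂ / τ₁) ^ (s + i))⁻¹) := by
  obtain ⟨m, rfl⟩ := Nat.exists_eq_add_of_le' hr
  have hτ₁ : 0 < τ₁ := hτ₂.trans hττ
  have hq₁ : τ₂ / τ₁ ≤ 1 := (div_le_one hτ₁).2 hττ.le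
  have hx₁ : θ * (τ₂ / τ₁) ^ s < 1 :=
    (mul_le_of_le_one_right hθ₀.le (pow_le_one₀ (by positivity) hq₁)).trans_lt hθ₁
  have hterm : ∀ v : ℕ,
      dbinom τ₁ τ₂ (((m + 1 : ℕ) : ℝ) + v - 1) v * θ ^ v * τ₂ ^ (s * v) *
          τ₁ ^ (-((v * (m + 1 + s - 1) : ℕ) : ℤ))
        = gaussBinom (τ₂ / τ₁) m v * (θ * (τ₂ / τ₁) ^ s) ^ v := by
    intro v
    have hexp : v * (m + 1 + s - 1) = m * v + s * v := by
      rw [Nat.add_right_comm, Nat.add_sub_cancel]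
      ring
    rw [show ((m + 1 : ℕ) : ℝ) + v - 1 = m + v by push_cast; ring, dbinom_natCast_add hτ₂.le hττ,
      hexp, zpow_neg, zpow_natCast, pow_add, mul_pow, ← pow_mul, div_pow, mul_comm s v]
    field_simp
  have hfactor : ∀ i, 1 - θ * (τ₂ / τ₁) ^ s * (τ₂ / τ₁) ^ i = 1 - θ * (τ₂ / τ₁) ^ (s + i) :=
    fun i => by ring
  simpa only [hterm, hfactor] using
    hasSum_gaussBinom_mul_pow (by positivity) hq₁ m (by positivity) hx₁
end
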